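/- arXiv:1210.1732 — 6 statements merged into one kernel-verified Lean document; each statement's English description precedes it below -/
import Mathlib

section
/- Let S = A ⋊_ρ T be a twisted semidirect product of an abelian group A by T with 2-cocycle ρ ∈ Z²(T,A). Suppose μ ∈ Z²(S, ℂ^×) is a normalized 2-cocycle that is normal, i.e. μ((a,e),(e,t)) = 1 for all a ∈ A, t ∈ T. Then μ is completely determined by its restrictions μ_{T,T}(t,t') := μ((e,t),(e,t')), μ_{A,A}(a,a') := μ((a,e),(a',e)), and μ_{T,A}(t,a') := μ((e,t),(a',e)), via the formula μ((a,t),(a',t')) = μ_{T,T}(t,t')·μ_{T,A}(t,a')·μ_{A,A}(a, ᵗa')·μ_{A,A}(a(ᵗa'), ρ(t,t')). -/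
/-- Let `S ≅ A ⋊_ρ T` via an abelian normal subgroup `A`, a section `u` of
`T = S/A`, action `ᵗa = u(t)au(t)⁻¹` and `ρ(t,t') = u(t)u(t')u(tt')⁻¹`.  A normalized
2-cocycle `μ ∈ Z²(S,ℂˣ)` which is normal (`μ(a, u(t)) = 1` for `a ∈ A`) is completely
determined by its restrictions `μ_{T,T}`, `μ_{A,A}`, `μ_{T,A}` via
`μ(a·u(t), a'·u(t')) = μ_{T,T}(t,t') μ_{T,A}(t,a') μ_{A,A}(a, ᵗa') μ_{A,A}(a·ᵗa', ρ(t,t'))`. -/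
theorem stmt4 (S : Type*) [Group S] [Finite S] (A : Subgroup S) [A.Normal]
    (hcomm : ∀ a b : S, a ∈ A → b ∈ A → a * b = b * a)
    (u : S ⧸ A → S) (hu : ∀ M, (QuotientGroup.mk (u M) : S ⧸ A) = M)
    (hu1 : u 1 = 1)
    (μ : S → S → ℂˣ)
    (hcoc : ∀ x y z : S, μ x y * μ (x * y) z = μ x (y * z) * μ y z)
    (hn1 : ∀ x, μ 1 x = 1) (hn2 : ∀ x, μ x 1 = 1)
    (hnormal : ∀ a : S, a ∈ A → ∀ t : S ⧸ A, μ a (u t) = 1) :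
    ∀ (a a' : S), a ∈ A → a' ∈ A → ∀ t t' : S ⧸ A,
      μ (a * u t) (a' * u t') =
        μ (u t) (u t') * μ (u t) a' * μ a (u t * a' * (u t)⁻¹) *
          μ (a * (u t * a' * (u t)⁻¹)) (u t * u t' * (u (t * t'))⁻¹) := by
  intro a a' ha ha' t t'
  set b : S := u t * a' * (u t)⁻¹ with hb_def
  set r : S := u t * u t' * (u (t * t'))⁻¹ with hr_def
  have hb : b ∈ A := Subgroup.Normal.conj_mem ‹A.Normal› a' ha' (u t)
  have hr : r ∈ A := by
    rw [← QuotientGroup.eq_one_iff]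
    simp [hr_def, hu]
  -- key group identities
  have k1 : b * u t = u t * a' := by rw [hb_def]; group
  have k2 : u t * u t' = r * u (t * t') := by rw [hr_def]; group
  have k3 : u t * (a' * u t') = b * r * u (t * t') := by rw [hb_def, hr_def]; group
  -- h1 : expand along a | u t | a' u t'
  have h1 := hcoc a (u t) (a' * u t')
  rw [hnormal a ha t, one_mul, k3] at h1
  -- h2 : expand along u t | a' | u t'
  have h2 := hcoc (u t) a' (u t')
  rw [hnormal a' ha' t', mul_one] at h2
  -- h3 : expand along b | u t | u t'
  have h3 := hcoc b (u t) (u t')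
  rw [hnormal b hb t, one_mul, k1, k2] at h3
  -- h4 : μ b (r * u (t*t')) = μ b r
  have h4 := hcoc b r (u (t * t'))
  rw [hnormal (b * r) (A.mul_mem hb hr) (t * t'), hnormal r hr (t * t'), mul_one, mul_one] at h4
  -- h5 : μ a (b * r * u (t*t')) = μ a (b * r)
  have h5 := hcoc a (b * r) (u (t * t'))
  rw [hnormal (a * (b * r)) (A.mul_mem ha (A.mul_mem hb hr)) (t * t'),
    hnormal (b * r) (A.mul_mem hb hr) (t * t'), mul_one, mul_one] at h5
  -- h6 : expand along a | b | r
  have h6 := hcoc a b r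
  -- combine
  have e1 : μ (a * u t) (a' * u t') = μ a (b * r * u (t * t')) * μ (u t) (a' * u t') := h1
  rw [e1, ← h5, ← h2, h3, ← h4]
  have : μ a (b * r) * μ b r = μ a b * μ (a * b) r := h6.symm
  calc μ a (b * r) * (μ (u t) a' * (μ b r * μ (u t) (u t')))
      = (μ a (b * r) * μ b r) * μ (u t) a' * μ (u t) (u t') := by ac_rfl
    _ = (μ a b * μ (a * b) r) * μ (u t) a' * μ (u t) (u t') := by rw [this]
    _ = μ (u t) (u t') * μ (u t) a' * μ a b * μ (a * b) r := by ac_rfl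
end

section
/- Let S be a finite group, A ≤ S, and L a subgroup of S × S^op such that (S × {e})·L = S × S^op = ({e} × S^op)·L, with L ∩ (S × {e}) = A₁ × {e} and L ∩ ({e} × S^op) = {e} × A₂. Then the map f₁ : (S × S^op)/L → S/A₁ sending a coset M to p₁(M ∩ (S × {e})) is a well-defined bijection, where p₁(s,t^op) = s. -/
/-- Let `L ≤ S × Sᵒᵖ` with `(S×{e})·L = S×Sᵒᵖ = ({e}×Sᵒᵖ)·L` and
`L ∩ (S×{e}) = A₁×{e}`, `L ∩ ({e}×Sᵒᵖ) = {e}×A₂`.  Then the map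
`f₁ : (S×Sᵒᵖ)/L → S/A₁`, sending a coset `M` to `p₁(M ∩ (S×{e}))`, is a well-defined
bijection; `F` below is `f₁`, characterized by `F(xL) = σA₁ ↔ (σ,e) ∈ xL`. -/
theorem stmt7 (S : Type*) [Group S] [Finite S] (L : Subgroup (S × Sᵐᵒᵖ))
    (hL1 : ∀ x : S × Sᵐᵒᵖ, ∃ s : S, ∃ l ∈ L, x = (s, (1 : Sᵐᵒᵖ)) * l)
    (hL2 : ∀ x : S × Sᵐᵒᵖ, ∃ t : Sᵐᵒᵖ, ∃ l ∈ L, x = ((1 : S), t) * l)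
    (A₁ : Subgroup S)
    (hA1 : ∀ s : S, (s, (1 : Sᵐᵒᵖ)) ∈ L ↔ s ∈ A₁)
    (A₂ : Subgroup S)
    (hA2 : ∀ s : S, ((1 : S), MulOpposite.op s) ∈ L ↔ s ∈ A₂) :
    ∃ F : (S × Sᵐᵒᵖ) ⧸ L → S ⧸ A₁,
      Function.Bijective F ∧
      ∀ (x : S × Sᵐᵒᵖ) (σ : S),
        (F (QuotientGroup.mk x) = QuotientGroup.mk σ ↔ x⁻¹ * (σ, (1 : Sᵐᵒᵖ)) ∈ L) := by
  -- g : S ⧸ A₁ → (S × Sᵐᵒᵖ) ⧸ L, σA₁ ↦ (σ,1)L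
  have hwd : ∀ σ σ' : S, σ⁻¹ * σ' ∈ A₁ →
      (QuotientGroup.mk ((σ, 1) : S × Sᵐᵒᵖ) : (S × Sᵐᵒᵖ) ⧸ L) = QuotientGroup.mk (σ', 1) := by
    intro σ σ' h
    exact QuotientGroup.eq.mpr (by simpa using (hA1 _).mpr h)
  let g : S ⧸ A₁ → (S × Sᵐᵒᵖ) ⧸ L :=
    Quotient.lift (fun σ => QuotientGroup.mk ((σ, 1) : S × Sᵐᵒᵖ))
      (fun σ σ' h => hwd σ σ' (QuotientGroup.leftRel_apply.mp h))
  have hg : Function.Bijective g := by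
    constructor
    · intro a b
      induction a using QuotientGroup.induction_on with | H σ =>
      induction b using QuotientGroup.induction_on with | H σ' =>
      intro h
      have : (σ⁻¹ * σ', (1 : Sᵐᵒᵖ)) ∈ L := by
        simpa using QuotientGroup.eq.mp h
      exact QuotientGroup.eq.mpr ((hA1 _).mp this)
    · intro b
      induction b using QuotientGroup.induction_on with | H x =>
      obtain ⟨s, l, hl, hx⟩ := hL1 x
      exact ⟨QuotientGroup.mk s, (QuotientGroup.eq.mpr (by
        have h2 : x⁻¹ * ((s, 1) : S × Sᵐᵒᵖ) = l⁻¹ := by rw [hx]; group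
        rw [h2]; exact L.inv_mem hl)).symm⟩
  refine ⟨(Equiv.ofBijective g hg).symm, (Equiv.ofBijective g hg).symm.bijective, ?_⟩
  intro x σ
  rw [Equiv.symm_apply_eq]
  have : (Equiv.ofBijective g hg) (QuotientGroup.mk σ) = QuotientGroup.mk ((σ, 1) : S × Sᵐᵒᵖ) := rfl
  rw [eq_comm, this]
  rw [QuotientGroup.eq]
  constructor
  · intro h; simpa using L.inv_mem h
  · intro h; simpa using L.inv_mem h
end

section
/- Let S be a finite group, A ⊴ S, and for an anti-automorphism f of S/A (i.e. f(MN) = f(N)f(M)) define L(A,f) := { (s,t^op) ∈ S × S^op : f(sA) = tA }. If f and f' are anti-automorphisms of S/A, then L(A,f) and L(A,f') are conjugate subgroups of S × S^op if and only if f = Ad(xA) ∘ f' for some x ∈ S, where Ad(xA)(M) = (xA)M(xA)⁻¹. Moreover, for such x, L(A,f') = (1,x)·L(A,f)·(1,x)⁻¹ in S × S^op. -/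
/-- For anti-automorphisms `f, f'` of `S/A` (`A ⊴ S`), the subgroups
`L(A,f) = {(s,tᵒᵖ) : f(sA) = tA}` and `L(A,f')` of `S × Sᵒᵖ` are conjugate iff
`f = Ad(xA) ∘ f'` for some `x ∈ S`; and for such `x`,
`L(A,f') = (1,x)·L(A,f)·(1,x)⁻¹`. -/
theorem stmt9 (S : Type*) [Group S] [Finite S] (A : Subgroup S) [A.Normal]
    (f f' : S ⧸ A → S ⧸ A)
    (hf : Function.Bijective f) (hf' : Function.Bijective f')
    (hfa : ∀ M N, f (M * N) = f N * f M)
    (hfa' : ∀ M N, f' (M * N) = f' N * f' M) :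
    ((∃ g : S × Sᵐᵒᵖ,
        {p : S × Sᵐᵒᵖ | f' (QuotientGroup.mk p.1) =
            (QuotientGroup.mk (MulOpposite.unop p.2) : S ⧸ A)} =
          (fun l => g * l * g⁻¹) ''
            {p : S × Sᵐᵒᵖ | f (QuotientGroup.mk p.1) =
              (QuotientGroup.mk (MulOpposite.unop p.2) : S ⧸ A)}) ↔
      ∃ x : S, ∀ M, f M =
        (QuotientGroup.mk x : S ⧸ A) * f' M * (QuotientGroup.mk x : S ⧸ A)⁻¹) ∧
    (∀ x : S,
      (∀ M, f M =
        (QuotientGroup.mk x : S ⧸ A) * f' M * (QuotientGroup.mk x : S ⧸ A)⁻¹) →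
      {p : S × Sᵐᵒᵖ | f' (QuotientGroup.mk p.1) =
          (QuotientGroup.mk (MulOpposite.unop p.2) : S ⧸ A)} =
        (fun l => ((1, MulOpposite.op x) : S × Sᵐᵒᵖ) * l *
            ((1, MulOpposite.op x) : S × Sᵐᵒᵖ)⁻¹) ''
          {p : S × Sᵐᵒᵖ | f (QuotientGroup.mk p.1) =
            (QuotientGroup.mk (MulOpposite.unop p.2) : S ⧸ A)}) := by
  have f1 : f 1 = 1 := by
    have h := hfa 1 1
    rw [mul_one] at h
    exact (left_eq_mul.mp h)
  have finv : ∀ M, f M⁻¹ = (f M)⁻¹ := by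
    intro M
    have h := hfa M M⁻¹
    rw [mul_inv_cancel, f1] at h
    exact eq_inv_of_mul_eq_one_left h.symm
  have key : ∀ x : S,
      (∀ M, f M =
        (QuotientGroup.mk x : S ⧸ A) * f' M * (QuotientGroup.mk x : S ⧸ A)⁻¹) →
      {p : S × Sᵐᵒᵖ | f' (QuotientGroup.mk p.1) =
          (QuotientGroup.mk (MulOpposite.unop p.2) : S ⧸ A)} =
        (fun l => ((1, MulOpposite.op x) : S × Sᵐᵒᵖ) * l *
            ((1, MulOpposite.op x) : S × Sᵐᵒᵖ)⁻¹) ''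
          {p : S × Sᵐᵒᵖ | f (QuotientGroup.mk p.1) =
            (QuotientGroup.mk (MulOpposite.unop p.2) : S ⧸ A)} := by
    intro x hx
    ext p
    simp only [Set.mem_setOf_eq, Set.mem_image, Prod.ext_iff, Prod.fst_mul, Prod.snd_mul,
      Prod.fst_inv, Prod.snd_inv, one_mul, mul_one, inv_one]
    constructor
    · intro hp
      refine ⟨(p.1, MulOpposite.op (x * MulOpposite.unop p.2 * x⁻¹)), ?_, ?_, ?_⟩
      · show f _ = (QuotientGroup.mk (MulOpposite.unop (MulOpposite.op _)) : S ⧸ A)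
        rw [MulOpposite.unop_op, hx, hp]
        simp [QuotientGroup.mk_mul, mul_assoc]
      · rfl
      · show MulOpposite.op x * MulOpposite.op (x * MulOpposite.unop p.2 * x⁻¹) *
            (MulOpposite.op x)⁻¹ = p.2
        rw [← MulOpposite.op_inv, ← MulOpposite.op_mul, ← MulOpposite.op_mul]
        simp [mul_assoc]
    · rintro ⟨q, hq, h1, h2⟩
      have h2' : MulOpposite.unop p.2 = x⁻¹ * MulOpposite.unop q.2 * x := by
        rw [← h2]
        simp [mul_assoc]
      rw [← h1, h2']
      have := hx (QuotientGroup.mk q.1)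
      rw [hq] at this
      have : f' (QuotientGroup.mk q.1) =
          (QuotientGroup.mk x : S ⧸ A)⁻¹ * QuotientGroup.mk (MulOpposite.unop q.2) *
            (QuotientGroup.mk x : S ⧸ A) := by
        rw [this]; group
      rw [this]
      simp [QuotientGroup.mk_mul, mul_assoc]
  refine ⟨⟨?_, ?_⟩, key⟩
  · rintro ⟨g, hg⟩
    -- forward: derive pointwise relation
    set a := g.1 with ha
    set b := MulOpposite.unop g.2 with hb
    have hrel : ∀ M : S ⧸ A,
        f' ((QuotientGroup.mk a : S ⧸ A) * M * (QuotientGroup.mk a : S ⧸ A)⁻¹) =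
          (QuotientGroup.mk b : S ⧸ A)⁻¹ * f M * (QuotientGroup.mk b : S ⧸ A) := by
      intro M
      obtain ⟨s, rfl⟩ := QuotientGroup.mk_surjective M
      obtain ⟨t, ht⟩ := QuotientGroup.mk_surjective (f (QuotientGroup.mk s))
      have hmem : (s, MulOpposite.op t) ∈
          {p : S × Sᵐᵒᵖ | f (QuotientGroup.mk p.1) =
            (QuotientGroup.mk (MulOpposite.unop p.2) : S ⧸ A)} := by
        simpa using ht.symm
      have himg : g * (s, MulOpposite.op t) * g⁻¹ ∈
          {p : S × Sᵐᵒᵖ | f' (QuotientGroup.mk p.1) =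
            (QuotientGroup.mk (MulOpposite.unop p.2) : S ⧸ A)} := by
        rw [hg]
        exact ⟨_, hmem, rfl⟩
      have hfst : (g * (s, MulOpposite.op t) * g⁻¹).1 = a * s * a⁻¹ := rfl
      have hsnd : MulOpposite.unop (g * (s, MulOpposite.op t) * g⁻¹).2 =
          b⁻¹ * t * b := by
        simp [Prod.snd_mul, hb, mul_assoc]
      rw [Set.mem_setOf_eq, hfst, hsnd] at himg
      simp only [QuotientGroup.mk_mul, QuotientGroup.mk_inv] at himg
      rw [himg]
      simp [QuotientGroup.mk_mul, ← ht, mul_assoc]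
    -- choose x lifting f(mk a)⁻¹ * mk b
    obtain ⟨x, hxx⟩ := QuotientGroup.mk_surjective
      ((f (QuotientGroup.mk a))⁻¹ * (QuotientGroup.mk b : S ⧸ A))
    refine ⟨x, fun M => ?_⟩
    set α := (QuotientGroup.mk a : S ⧸ A)
    set β := (QuotientGroup.mk b : S ⧸ A)
    have h1 := hrel (α⁻¹ * M * α)
    have h2 : α * (α⁻¹ * M * α) * α⁻¹ = M := by group
    rw [h2] at h1
    have h3 : f (α⁻¹ * M * α) = f α * f M * (f α)⁻¹ := by
      rw [hfa, hfa, finv]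
      group
    rw [h3] at h1
    -- h1 : f' M = β⁻¹ * (f α * f M * (f α)⁻¹) * β
    have h4 : f M = (f α)⁻¹ * β * f' M * β⁻¹ * f α := by
      rw [h1]; group
    rw [hxx, h4]
    group
  · rintro ⟨x, hx⟩
    exact ⟨(1, MulOpposite.op x), key x hx⟩
end

section
/- With L(A,f) as above and L^op := ∨(L(A,f)) where ∨(s,t^op) = (t⁻¹, (s⁻¹)^op), the subgroups L(A,f) and L(A,f)^op are conjugate in S × S^op if and only if f² = Ad(xA) for some x ∈ S. In that case L(A,f)^op = (x,1)·L(A,f)·(x,1)⁻¹ = (1,x)·L(A,f)·(1,x)⁻¹. -/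
/-- With `L(A,f) = {(s,tᵒᵖ) : f(sA) = tA}` and
`L(A,f)ᵒᵖ = ∨(L(A,f))` where `∨(s,tᵒᵖ) = (t⁻¹,(s⁻¹)ᵒᵖ)`, the subgroups `L(A,f)` and
`L(A,f)ᵒᵖ` are conjugate in `S × Sᵒᵖ` iff `f² = Ad(xA)` for some `x ∈ S`; in that case
`L(A,f)ᵒᵖ = (x,1)·L(A,f)·(x,1)⁻¹ = (1,x)·L(A,f)·(1,x)⁻¹`. -/
theorem stmt10 (S : Type*) [Group S] [Finite S] (A : Subgroup S) [A.Normal]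
    (f : S ⧸ A → S ⧸ A) (hf : Function.Bijective f)
    (hfa : ∀ M N, f (M * N) = f N * f M)
    (Lset : Set (S × Sᵐᵒᵖ))
    (hLset : Lset = {p : S × Sᵐᵒᵖ | f (QuotientGroup.mk p.1) =
      (QuotientGroup.mk (MulOpposite.unop p.2) : S ⧸ A)})
    (Lop : Set (S × Sᵐᵒᵖ))
    (hLop : Lop = (fun p : S × Sᵐᵒᵖ =>
      ((MulOpposite.unop p.2)⁻¹, MulOpposite.op p.1⁻¹)) '' Lset) :
    ((∃ g : S × Sᵐᵒᵖ, Lop = (fun l => g * l * g⁻¹) '' Lset) ↔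
      ∃ x : S, ∀ M, f (f M) =
        (QuotientGroup.mk x : S ⧸ A) * M * (QuotientGroup.mk x : S ⧸ A)⁻¹) ∧
    (∀ x : S,
      (∀ M, f (f M) =
        (QuotientGroup.mk x : S ⧸ A) * M * (QuotientGroup.mk x : S ⧸ A)⁻¹) →
      Lop = (fun l => ((x, 1) : S × Sᵐᵒᵖ) * l * ((x, 1) : S × Sᵐᵒᵖ)⁻¹) '' Lset ∧
      Lop = (fun l => ((1, MulOpposite.op x) : S × Sᵐᵒᵖ) * l *
        ((1, MulOpposite.op x) : S × Sᵐᵒᵖ)⁻¹) '' Lset) := by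
  have hf1 : f 1 = 1 := by
    have h := hfa 1 1
    rw [mul_one] at h
    exact (left_eq_mul.mp h)
  have hfi : ∀ M, f M⁻¹ = (f M)⁻¹ := by
    intro M
    have h := hfa M M⁻¹
    rw [mul_inv_cancel, hf1] at h
    exact eq_inv_of_mul_eq_one_left h.symm
  -- characterization of Lop
  have hC : Lop = {p : S × Sᵐᵒᵖ |
      f (QuotientGroup.mk (MulOpposite.unop p.2)) = (QuotientGroup.mk p.1 : S ⧸ A)} := by
    rw [hLop, hLset]
    ext ⟨u, v⟩
    simp only [Set.mem_image, Set.mem_setOf_eq, Prod.mk.injEq, Prod.exists]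
    constructor
    · rintro ⟨s, t, h, hu, hv⟩
      subst hu; subst hv
      simp only [MulOpposite.unop_op]
      rw [QuotientGroup.mk_inv, QuotientGroup.mk_inv, hfi, h]
    · intro h
      refine ⟨(MulOpposite.unop v)⁻¹, MulOpposite.op u⁻¹, ?_, by simp, by simp⟩
      rw [QuotientGroup.mk_inv, hfi, h, MulOpposite.unop_op, QuotientGroup.mk_inv]
  have key : ∀ x : S,
      (∀ M, f (f M) =
        (QuotientGroup.mk x : S ⧸ A) * M * (QuotientGroup.mk x : S ⧸ A)⁻¹) →
      Lop = (fun l => ((x, 1) : S × Sᵐᵒᵖ) * l * ((x, 1) : S × Sᵐᵒᵖ)⁻¹) '' Lset ∧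
      Lop = (fun l => ((1, MulOpposite.op x) : S × Sᵐᵒᵖ) * l *
        ((1, MulOpposite.op x) : S × Sᵐᵒᵖ)⁻¹) '' Lset := by
    intro x hx
    constructor
    · rw [hC, hLset]
      ext ⟨u, v⟩
      simp only [Set.mem_image, Set.mem_setOf_eq, Prod.mk.injEq, Prod.exists,
        Prod.mk_mul_mk, Prod.inv_mk, inv_one, one_mul, mul_one]
      constructor
      · intro h
        refine ⟨x⁻¹ * u * x, v, ?_, by group, rfl⟩
        apply hf.injective
        rw [hx, h]
        simp only [QuotientGroup.mk_mul, QuotientGroup.mk_inv]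
        group
      · rintro ⟨a, b, hab, hu, hv⟩
        subst hu; subst hv
        rw [← hab, hx]
        simp only [QuotientGroup.mk_mul, QuotientGroup.mk_inv]
    · rw [hC, hLset]
      ext ⟨u, v⟩
      simp only [Set.mem_image, Set.mem_setOf_eq, Prod.mk.injEq, Prod.exists,
        Prod.mk_mul_mk, Prod.inv_mk, inv_one, one_mul, mul_one]
      constructor
      · intro h
        refine ⟨u, MulOpposite.op (x * MulOpposite.unop v * x⁻¹), ?_, rfl, ?_⟩
        · rw [← h, hx]
          simp only [MulOpposite.unop_op, QuotientGroup.mk_mul, QuotientGroup.mk_inv]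
        · apply MulOpposite.unop_injective
          simp [mul_assoc]
      · rintro ⟨a, b, hab, hu, hv⟩
        subst hu; subst hv
        have hunop : MulOpposite.unop (MulOpposite.op x * b * (MulOpposite.op x)⁻¹)
            = x⁻¹ * MulOpposite.unop b * x := by
          simp [mul_assoc]
        rw [hunop]
        apply hf.injective
        rw [hx]
        simp only [QuotientGroup.mk_mul, QuotientGroup.mk_inv]
        rw [← hab]
        group
  refine ⟨⟨?_, fun ⟨x, hx⟩ => ⟨(x, 1), (key x hx).1⟩⟩, key⟩
  rintro ⟨g, hg⟩
  obtain ⟨z, hz⟩ := QuotientGroup.mk_surjective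
    ((f (QuotientGroup.mk (MulOpposite.unop g.2)))⁻¹ * QuotientGroup.mk g.1)
  refine ⟨z, ?_⟩
  intro M
  obtain ⟨s, rfl⟩ := QuotientGroup.mk_surjective M
  obtain ⟨t, ht⟩ := QuotientGroup.mk_surjective (f (QuotientGroup.mk s))
  have hst : (s, MulOpposite.op t) ∈ Lset := by
    rw [hLset]; exact ht.symm
  have hmem : g * (s, MulOpposite.op t) * g⁻¹ ∈ Lop := by
    rw [hg]; exact Set.mem_image_of_mem _ hst
  rw [hC] at hmem
  set y := MulOpposite.unop g.2 with hy
  have hcomp1 : (g * (s, MulOpposite.op t) * g⁻¹).1 = g.1 * s * g.1⁻¹ := rfl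
  have hcomp2 : MulOpposite.unop (g * (s, MulOpposite.op t) * g⁻¹).2
      = y⁻¹ * t * y := by
    simp [mul_assoc, hy]
  simp only [Set.mem_setOf_eq, hcomp1, hcomp2, QuotientGroup.mk_mul,
    QuotientGroup.mk_inv] at hmem
  have e1 : f (((y : S ⧸ A))⁻¹ * t * y)
      = f (QuotientGroup.mk y) * f (f (QuotientGroup.mk s)) * (f (QuotientGroup.mk y))⁻¹ := by
    rw [hfa, hfa, hfi, ht]
    group
  rw [e1] at hmem
  have e2 : f (f (QuotientGroup.mk s : S ⧸ A))
      = (f (QuotientGroup.mk y))⁻¹ * ((g.1 : S ⧸ A) * QuotientGroup.mk s * (QuotientGroup.mk g.1)⁻¹)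
        * f (QuotientGroup.mk y) := by
    rw [← hmem]
    group
  rw [e2, hz]
  group
end

section
/- Let S be a finite group, A ⊴ S, and f an anti-automorphism of S/A. Suppose the ℤ/2ℤ-graded set X = S ⊔ S/A carries a fusion-ring structure with: s* = s⁻¹, s⊗s' = ss', s⊗M = p(s)M, M⊗s = M f⁻¹(p(s)⁻¹), and duality M ↦ M* an involution on S/A satisfying (s·M·t)* = t⁻¹·M*·s⁻¹ for the given actions. Then δ := (A)* (the dual of the unit coset 𝟏) satisfies f(δ) = δ⁻¹, M* = f(M)δ for all M ∈ S/A, and f² = Ad(δ). -/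
/-- Suppose `S ⊔ S/A` carries a ℤ/2ℤ-graded fusion-ring structure with
left action `s·M = p(s)M`, right action `M·s = M f⁻¹(p(s)⁻¹)` and an involutive duality
`M ↦ M*` on `S/A` satisfying `(s·M·t)* = t⁻¹·M*·s⁻¹`.  Then `δ := 𝟏*` satisfies
`f(δ) = δ⁻¹`, `M* = f(M)δ` for all `M`, and `f² = Ad(δ)`. -/
theorem stmt13 (S : Type*) [Group S] [Finite S] (A : Subgroup S) [A.Normal]
    (f : (S ⧸ A) ≃ (S ⧸ A))
    (hfa : ∀ M N, f (M * N) = f N * f M)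
    (star : S ⧸ A → S ⧸ A)
    (hinv : ∀ M, star (star M) = M)
    (hdual : ∀ (s t : S) (M : S ⧸ A),
      star ((QuotientGroup.mk s : S ⧸ A) * (M * f.symm ((QuotientGroup.mk t : S ⧸ A)⁻¹)))
        = (QuotientGroup.mk t : S ⧸ A)⁻¹ *
            (star M * f.symm (QuotientGroup.mk s : S ⧸ A))) :
    f (star 1) = (star 1)⁻¹ ∧
    (∀ M, star M = f M * star 1) ∧
    (∀ M, f (f M) = star 1 * M * (star 1)⁻¹) := by
  -- lift hdual to arbitrary quotient elements
  have hdual' : ∀ (P Q M : S ⧸ A),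
      star (P * (M * f.symm Q⁻¹)) = Q⁻¹ * (star M * f.symm P) := by
    intro P Q M
    obtain ⟨s, rfl⟩ := QuotientGroup.mk_surjective P
    obtain ⟨t, rfl⟩ := QuotientGroup.mk_surjective Q
    exact hdual s t M
  have hf1 : f 1 = 1 := by
    have h := hfa 1 1
    rw [mul_one] at h
    exact mul_eq_right.mp h.symm
  have hfs1 : f.symm 1 = 1 := by
    exact f.injective (by rw [Equiv.apply_symm_apply, hf1])
  -- star P = δ * f.symm P
  have h1 : ∀ P, star P = star 1 * f.symm P := by
    intro P
    have := hdual' P 1 1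
    simpa [hfs1] using this
  -- star R = f R * δ
  have h2 : ∀ R, star R = f R * star 1 := by
    intro R
    have := hdual' 1 (f R)⁻¹ 1
    simpa [hfs1, Equiv.symm_apply_apply] using this
  have hfd : f (star 1) = (star 1)⁻¹ := by
    have := hinv 1
    rw [h2 (star 1)] at this
    exact eq_inv_of_mul_eq_one_left this
  refine ⟨hfd, h2, fun M => ?_⟩
  have := (h1 (f M)).symm.trans (h2 (f M))
  rw [Equiv.symm_apply_apply] at this
  -- f (f M) * δ = δ * M
  rw [eq_mul_inv_iff_mul_eq]
  exact this.symm
end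

section
/- Let S be a finite group, A ⊴ S, and for i = 1,2 let (f_i, δ_i) be pairs with f_i an anti-automorphism of S/A, f_i² = Ad(δ_i), f_i(δ_i) = δ_i⁻¹. The ℤ/2ℤ-graded fusion rings on S ⊔ S/A determined by (f₁,δ₁) and (f₂,δ₂) (with rules s⊗M = p(s)M, M⊗s = M f_i⁻¹(p(s)⁻¹), M* = f_i(M)δ_i, M⊗N* = ⊕_{x∈MN⁻¹}x) are isomorphic if and only if there exists F ∈ Aut(S) with F(A) = A, F̄(δ₁) = δ₂, and F̄ ∘ f₁ ∘ F̄⁻¹ = f₂, where F̄ is the automorphism of S/A induced by F. -/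
/-- For pairs `(fᵢ, δᵢ)` (anti-automorphisms of `S/A` with
`fᵢ² = Ad(δᵢ)`, `fᵢ(δᵢ) = δᵢ⁻¹`), the ℤ/2ℤ-graded fusion rings on `S ⊔ S/A` they
determine are isomorphic iff there is `F ∈ Aut(S)` with `F(A) = A`, `F̄(δ₁) = δ₂`
and `F̄ ∘ f₁ ∘ F̄⁻¹ = f₂`, where `F̄` is the induced automorphism of `S/A`.  An
isomorphism is a pair `(F, φ)` preserving all the structure. -/
theorem stmt15 (S : Type*) [Group S] [Finite S] (A : Subgroup S) [A.Normal]
    (f₁ f₂ : (S ⧸ A) ≃ (S ⧸ A))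
    (hf₁ : ∀ M N, f₁ (M * N) = f₁ N * f₁ M)
    (hf₂ : ∀ M N, f₂ (M * N) = f₂ N * f₂ M)
    (δ₁ δ₂ : S ⧸ A)
    (h₁ : ∀ M, f₁ (f₁ M) = δ₁ * M * δ₁⁻¹) (hδ₁ : f₁ δ₁ = δ₁⁻¹)
    (h₂ : ∀ M, f₂ (f₂ M) = δ₂ * M * δ₂⁻¹) (hδ₂ : f₂ δ₂ = δ₂⁻¹) :
    (∃ F : S ≃* S, ∃ φ : (S ⧸ A) ≃ (S ⧸ A),
      φ 1 = 1 ∧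
      (∀ (s : S) (M : S ⧸ A),
        φ ((QuotientGroup.mk s : S ⧸ A) * M) = (QuotientGroup.mk (F s) : S ⧸ A) * φ M) ∧
      (∀ (s : S) (M : S ⧸ A),
        φ (M * f₁.symm ((QuotientGroup.mk s : S ⧸ A)⁻¹)) =
          φ M * f₂.symm ((QuotientGroup.mk (F s) : S ⧸ A)⁻¹)) ∧
      (∀ M : S ⧸ A, φ (f₁ M * δ₁) = f₂ (φ M) * δ₂) ∧
      (∀ (M N : S ⧸ A) (x : S),
        (QuotientGroup.mk x : S ⧸ A) = M * N⁻¹ →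
          (QuotientGroup.mk (F x) : S ⧸ A) = φ M * (φ N)⁻¹)) ↔
    (∃ F : S ≃* S,
      (∀ a : S, a ∈ A ↔ F a ∈ A) ∧
      (∀ s : S, (QuotientGroup.mk s : S ⧸ A) = δ₁ →
        (QuotientGroup.mk (F s) : S ⧸ A) = δ₂) ∧
      (∀ s s' : S, f₁ (QuotientGroup.mk s) = (QuotientGroup.mk s' : S ⧸ A) →
        f₂ (QuotientGroup.mk (F s)) = (QuotientGroup.mk (F s') : S ⧸ A))) := by
  have f₁1 : f₁ 1 = 1 := by
    have h := hf₁ 1 1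
    rw [mul_one] at h
    exact mul_left_cancel (by rw [← h, mul_one])
  have f₂1 : f₂ 1 = 1 := by
    have h := hf₂ 1 1
    rw [mul_one] at h
    exact mul_left_cancel (by rw [← h, mul_one])
  constructor
  · rintro ⟨F, φ, hφ1, hL, _hR, hstar, hdual⟩
    have key : ∀ s : S, φ (QuotientGroup.mk s) = QuotientGroup.mk (F s) := by
      intro s
      have := hL s 1
      simpa [hφ1] using this
    have hδ : φ δ₁ = δ₂ := by
      have := hstar 1
      rwa [f₁1, hφ1, f₂1, one_mul, one_mul] at this
    refine ⟨F, ?_, ?_, ?_⟩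
    · intro a
      constructor
      · intro ha
        have hx : (QuotientGroup.mk a : S ⧸ A) = 1 * (1 : S ⧸ A)⁻¹ := by
          simp [(QuotientGroup.eq_one_iff (a : S)).mpr ha]
        have := hdual 1 1 a hx
        rw [hφ1] at this
        simp only [inv_one, mul_one] at this
        exact (QuotientGroup.eq_one_iff _).mp this
      · intro ha
        have h1 : φ (QuotientGroup.mk a) = (1 : S ⧸ A) := by
          rw [key, (QuotientGroup.eq_one_iff _).mpr ha]
        have : φ (QuotientGroup.mk a) = φ 1 := by rw [h1, hφ1]
        have := φ.injective this
        exact (QuotientGroup.eq_one_iff _).mp this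
    · intro s hs
      rw [← key, hs, hδ]
    · intro s s' hss'
      obtain ⟨t, ht⟩ := QuotientGroup.mk_surjective δ₁
      have hFt : (QuotientGroup.mk (F t) : S ⧸ A) = δ₂ := by rw [← key, ht, hδ]
      have h := hstar (QuotientGroup.mk s)
      rw [hss', key, ← ht, ← QuotientGroup.mk_mul, key, map_mul, QuotientGroup.mk_mul, hFt] at h
      exact (mul_right_cancel h).symm
  · rintro ⟨F, hA, hδ, hff⟩
    have hmap : Subgroup.map (F : S →* S) A = A := by
      ext x
      constructor
      · rintro ⟨a, ha, rfl⟩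
        exact (hA a).mp ha
      · intro hx
        exact ⟨F.symm x, (hA (F.symm x)).mpr (by simpa using hx), by simp⟩
    set e := QuotientGroup.congr A A F hmap with he
    have keyφ : ∀ s : S, e (QuotientGroup.mk s) = QuotientGroup.mk (F s) := fun s =>
      QuotientGroup.congr_mk A A F hmap s
    have hδ' : e δ₁ = δ₂ := by
      obtain ⟨t, ht⟩ := QuotientGroup.mk_surjective δ₁
      rw [← ht, keyφ]
      exact hδ t ht
    have hcomm : ∀ M, e (f₁ M) = f₂ (e M) := by
      intro M
      obtain ⟨s, hs⟩ := QuotientGroup.mk_surjective M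
      obtain ⟨s', hs'⟩ := QuotientGroup.mk_surjective (f₁ M)
      rw [← hs', keyφ, ← hs, keyφ]
      exact (hff s s' (by rw [hs, hs'])).symm
    have hsymm : ∀ M, e (f₁.symm M) = f₂.symm (e M) := by
      intro M
      have := hcomm (f₁.symm M)
      rw [f₁.apply_symm_apply] at this
      rw [this, f₂.symm_apply_apply]
    refine ⟨F, e.toEquiv, map_one e, ?_, ?_, ?_, ?_⟩
    · intro s M
      show e _ = _ * e M
      rw [map_mul, keyφ]
    · intro s M
      show e _ = e M * _
      rw [map_mul, hsymm, map_inv, keyφ]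
    · intro M
      show e _ = f₂ (e M) * δ₂
      rw [map_mul, hcomm, hδ']
    · intro M N x hx
      show _ = e M * (e N)⁻¹
      rw [← keyφ, hx, map_mul, map_inv]
end
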